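/- Let a_0, a_∞ ∈ ℂ and ẽ_1 ∈ ℂ∖{0}. Define the maps g̃_{t1}², g̃_{1t}²: ℂ³ → ℂ³ by g̃_{t1}²(X_0,W_t,U_1) = (X_0, W_t − F̃_{W_t}, U_1 − F̃_{U_1} + X_0F̃_{W_t}) and g̃_{1t}²(X_0,W_t,U_1) = (X_0, W_t − F̃_{W_t} + X_0F̃_{U_1}, U_1 − F̃_{U_1}), where the partials are evaluated at (X_0,W_t,U_1;ã). Then: (1) F̃(g̃_{t1}²(X_0,W_t,U_1); ã) = F̃(X_0,W_t,U_1; ã) and F̃(g̃_{1t}²(X_0,W_t,U_1); ã) = F̃(X_0,W_t,U_1; ã) for all (X_0,W_t,U_1) ∈ ℂ³; (2) g̃_{1t}²(g̃_{t1}²(X_0,W_t,U_1)) = (X_0,W_t,U_1) whenever F̃(X_0,W_t,U_1;ã) = 0. -/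

import Mathlib

/-!
`F̃` is monic quadratic in `W_t` and in `U_1`, so each of these variables has a Vieta
involution, `s_W : W_t ↦ W_t − F̃_{W_t}` and `s_U : U_1 ↦ U_1 − F̃_{U_1}` (`vietaW`, `vietaU`),
exchanging the two roots and hence preserving `F̃`.
Evaluating the partials after the first move shows `g̃_{t1}² = s_U ∘ s_W` and
`g̃_{1t}² = s_W ∘ s_U`, so both preserve `F̃` and are inverse to each other on all of `ℂ³`.
-/

noncomputable section

/-- The PV Fricke polynomial `F̃(p; a0, ẽ1, a∞)`, on triples `p = (X0, Wt, U1)`. -/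
def FVp (a0 te1 aI : ℂ) (p : ℂ × ℂ × ℂ) : ℂ :=
  p.1 * p.2.1 * p.2.2 + p.2.1 ^ 2 + p.2.2 ^ 2
    - (-te1) * p.1 - (aI - te1 * a0) * p.2.1 - (a0 - te1 * aI) * p.2.2
    + (1 - te1 * a0 * aI + te1 ^ 2)

/-- The PV monodromy map `g̃_{t1}² : (X0, Wt, U1) ↦ (X0, Wt − F̃_{Wt}, U1 − F̃_{U1} + X0F̃_{Wt})`. -/
def gt1sq (a0 te1 aI : ℂ) (p : ℂ × ℂ × ℂ) : ℂ × ℂ × ℂ :=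
  (p.1,
   p.2.1 - (p.1 * p.2.2 + 2 * p.2.1 - (aI - te1 * a0)),
   p.2.2 - (p.1 * p.2.1 + 2 * p.2.2 - (a0 - te1 * aI))
     + p.1 * (p.1 * p.2.2 + 2 * p.2.1 - (aI - te1 * a0)))

/-- The PV monodromy map `g̃_{1t}² : (X0, Wt, U1) ↦ (X0, Wt − F̃_{Wt} + X0F̃_{U1}, U1 − F̃_{U1})`. -/
def g1tsq (a0 te1 aI : ℂ) (p : ℂ × ℂ × ℂ) : ℂ × ℂ × ℂ :=
  (p.1,
   p.2.1 - (p.1 * p.2.2 + 2 * p.2.1 - (aI - te1 * a0))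
     + p.1 * (p.1 * p.2.1 + 2 * p.2.2 - (a0 - te1 * aI)),
   p.2.2 - (p.1 * p.2.1 + 2 * p.2.2 - (a0 - te1 * aI)))

section VietaInvolutions

variable (a0 te1 aI : ℂ)

def vietaW (p : ℂ × ℂ × ℂ) : ℂ × ℂ × ℂ :=
  (p.1, p.2.1 - (p.1 * p.2.2 + 2 * p.2.1 - (aI - te1 * a0)), p.2.2)

def vietaU (p : ℂ × ℂ × ℂ) : ℂ × ℂ × ℂ :=
  (p.1, p.2.1, p.2.2 - (p.1 * p.2.1 + 2 * p.2.2 - (a0 - te1 * aI)))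

theorem vietaW_involutive : Function.Involutive (vietaW a0 te1 aI) := by
  rintro ⟨x, w, u⟩
  simp only [vietaW, Prod.mk.injEq, true_and, and_true]
  ring

theorem vietaU_involutive : Function.Involutive (vietaU a0 te1 aI) := by
  rintro ⟨x, w, u⟩
  simp only [vietaU, Prod.mk.injEq, true_and]
  ring

theorem FVp_vietaW (p : ℂ × ℂ × ℂ) : FVp a0 te1 aI (vietaW a0 te1 aI p) = FVp a0 te1 aI p := by
  simp only [FVp, vietaW]
  ring

theorem FVp_vietaU (p : ℂ × ℂ × ℂ) : FVp a0 te1 aI (vietaU a0 te1 aI p) = FVp a0 te1 aI p := by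
  simp only [FVp, vietaU]
  ring

theorem gt1sq_eq_vietaU_comp_vietaW : gt1sq a0 te1 aI = vietaU a0 te1 aI ∘ vietaW a0 te1 aI := by
  funext ⟨x, w, u⟩
  simp only [Function.comp_apply, gt1sq, vietaU, vietaW, Prod.mk.injEq, true_and]
  ring

theorem g1tsq_eq_vietaW_comp_vietaU : g1tsq a0 te1 aI = vietaW a0 te1 aI ∘ vietaU a0 te1 aI := by
  funext ⟨x, w, u⟩
  simp only [Function.comp_apply, g1tsq, vietaU, vietaW, Prod.mk.injEq, true_and, and_true]
  ring

end VietaInvolutions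

theorem PV_monodromy_preserves_fricke_and_inverse_general
    (a0 aI : ℂ) (te1 : ℂ) :
    (∀ p : ℂ × ℂ × ℂ,
      FVp a0 te1 aI (gt1sq a0 te1 aI p) = FVp a0 te1 aI p ∧
      FVp a0 te1 aI (g1tsq a0 te1 aI p) = FVp a0 te1 aI p) ∧
    (∀ p : ℂ × ℂ × ℂ, FVp a0 te1 aI p = 0 → g1tsq a0 te1 aI (gt1sq a0 te1 aI p) = p) := by
  simp only [gt1sq_eq_vietaU_comp_vietaW, g1tsq_eq_vietaW_comp_vietaU, Function.comp_apply,
    FVp_vietaU, FVp_vietaW, vietaU_involutive a0 te1 aI _, vietaW_involutive a0 te1 aI _,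
    and_self, implies_true]

/-- **PV monodromy maps preserve the Fricke polynomial and are mutually inverse on the
character variety:** (1) `F̃ ∘ g̃_{t1}² = F̃` and `F̃ ∘ g̃_{1t}² = F̃`;
(2) `g̃_{1t}² ∘ g̃_{t1}² = id` on `{F̃ = 0}`. -/
theorem PV_monodromy_preserves_fricke_and_inverse
    (a0 aI : ℂ) (te1 : ℂ) (hte1 : te1 ≠ 0) :
    (∀ p : ℂ × ℂ × ℂ,
      FVp a0 te1 aI (gt1sq a0 te1 aI p) = FVp a0 te1 aI p ∧
      FVp a0 te1 aI (g1tsq a0 te1 aI p) = FVp a0 te1 aI p) ∧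
    (∀ p : ℂ × ℂ × ℂ, FVp a0 te1 aI p = 0 → g1tsq a0 te1 aI (gt1sq a0 te1 aI p) = p) :=
  PV_monodromy_preserves_fricke_and_inverse_general a0 aI te1
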